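/- arXiv:2007.14360 — 3 statements merged into one kernel-verified Lean document; each statement's English description precedes it below -/
import Mathlib

section
/- Let K_j : ℤ → ℂ for dyadic j = 2^m be functions, each supported in [-j, j] with ∑_y |K_j(y)|² ≤ 1/j. Then for any dyadic s and any x with |x| ≤ 2s, the tail sum satisfies ∑_{j > s, j dyadic} |(𝟙_{[-4s,4s]} * K_j)(x)| ≤ (8s)^{1/2} ∑_{j > s dyadic} j^{-1/2} ≤ 8^{1/2}/(√2 - 1), a universal constant. -/
/-- Convolution on ℤ. -/
noncomputable def conv (f g : ℤ → ℂ) : ℤ → ℂ := fun x => ∑' y : ℤ, f (x - y) * g y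

/-- Indicator of [-4·2ⁿ, 4·2ⁿ]. -/
noncomputable def ind4 (n : ℕ) : ℤ → ℂ := fun x => if |x| ≤ (4 * 2 ^ n : ℤ) then 1 else 0

/-!
For `j = 2 ^ m > s = 2 ^ n`, Cauchy–Schwarz bounds `|(𝟙_{[-4s,4s]} * K_j)(x)|` by
`√(#W) · ‖K_j‖₂ ≤ √(#W / j)`, where `W` is the window `[x - 4s, x + 4s]` cut down to the support
`[-j, j]` of `K_j`. The window has `8s + 1` points, one too many for a termwise comparison with
`√(8s / j)`; but at the first scale `j = 2s` the support has only `4s + 1 ≤ 5s` points, and this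
saving pays for the bound `8s + 1 ≤ 9s` at all larger scales: `√5 / √2 + 3 Σ_{k ≥ 2} 2^(-k/2)`
is still below `√8 / (√2 - 1)`.
-/

open Finset

lemma Real.sqrt_pow_eq_pow_sqrt {a : ℝ} (ha : 0 ≤ a) (k : ℕ) : √(a ^ k) = √a ^ k := by
  rw [← Real.sqrt_sq (pow_nonneg (Real.sqrt_nonneg a) k), ← pow_mul, mul_comm, pow_mul,
    Real.sq_sqrt ha]

lemma tsum_subtype_lt_eq {α : Type*} [AddCommMonoid α] [TopologicalSpace α] (f : ℕ → α) (n : ℕ) :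
    ∑' m : {m : ℕ // n < m}, f m = ∑' k : ℕ, f (n + (k + 1)) := by
  refine (Function.Injective.tsum_eq (g := fun k ↦ (⟨n + (k + 1), by omega⟩ : {m // n < m}))
    (fun a b h ↦ by simpa using h) ?_).symm
  rintro m -
  exact ⟨m - (n + 1), Subtype.ext (by simp; omega)⟩

lemma sqrt_mul_tsum_inv_sqrt_two_pow {c : ℝ} (hc : 0 ≤ c) (n : ℕ) :
    √(c * 2 ^ n) * ∑' m : {m : ℕ // n < m}, (√(2 ^ (m : ℕ)))⁻¹ = √c / (√2 - 1) := by
  have hr : (√2)⁻¹ < 1 := inv_lt_one_of_one_lt₀ (by rw [Real.lt_sqrt zero_le_one]; norm_num)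
  have hgeom : ∑' k : ℕ, (√2)⁻¹ ^ k = (1 - (√2)⁻¹)⁻¹ := tsum_geometric_of_lt_one (by positivity) hr
  rw [tsum_subtype_lt_eq (fun m ↦ (√(2 ^ m))⁻¹)]
  have hterm : ∀ k : ℕ, (√(2 ^ (n + (k + 1))))⁻¹ = (√2)⁻¹ ^ (n + 1) * (√2)⁻¹ ^ k := fun k ↦ by
    rw [Real.sqrt_pow_eq_pow_sqrt zero_le_two, ← inv_pow]; ring
  rw [tsum_congr hterm, tsum_mul_left, hgeom, Real.sqrt_mul hc,
    Real.sqrt_pow_eq_pow_sqrt zero_le_two, inv_pow, pow_succ]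
  field_simp

lemma norm_conv_le_sqrt_card_mul {f g : ℤ → ℂ} {x : ℤ} {T : Finset ℤ}
    (hf : ∀ y, ‖f y‖ ≤ 1) (hT : ∀ y ∉ T, f (x - y) * g y = 0)
    (hg : Summable fun y ↦ ‖g y‖ ^ 2) :
    ‖conv f g x‖ ≤ √(#T * ∑' y, ‖g y‖ ^ 2) := by
  have hcs : (∑ y ∈ T, ‖g y‖) ^ 2 ≤ #T * ∑' y, ‖g y‖ ^ 2 :=
    sq_sum_le_card_mul_sum_sq.trans (by gcongr; exact hg.sum_le_tsum T fun y _ ↦ by positivity)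
  calc ‖conv f g x‖ = ‖∑ y ∈ T, f (x - y) * g y‖ := by rw [conv, tsum_eq_sum hT]
    _ ≤ ∑ y ∈ T, ‖g y‖ := norm_sum_le_of_le _ fun y _ ↦ by
        rw [norm_mul]; exact mul_le_of_le_one_left (norm_nonneg _) (hf _)
    _ ≤ √(#T * ∑' y, ‖g y‖ ^ 2) := Real.le_sqrt_of_sq_le hcs

lemma norm_ind4_le_one (n : ℕ) (y : ℤ) : ‖ind4 n y‖ ≤ 1 := by
  unfold ind4; split_ifs <;> simp

lemma card_Icc_inter_Icc_le_left (a b c d : ℤ) : #(Icc a b ∩ Icc c d) ≤ (b + 1 - a).toNat :=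
  (card_le_card inter_subset_left).trans_eq (Int.card_Icc a b)

lemma card_Icc_inter_Icc_le_right (a b c d : ℤ) : #(Icc a b ∩ Icc c d) ≤ (d + 1 - c).toNat :=
  (card_le_card inter_subset_right).trans_eq (Int.card_Icc c d)

lemma summable_sq_norm_of_support {K : ℕ → ℤ → ℂ}
    (hsupp : ∀ m x, (2 ^ m : ℤ) < |x| → K m x = 0) (m : ℕ) :
    Summable fun y ↦ ‖K m y‖ ^ 2 := by
  refine summable_of_ne_finset_zero (s := Icc (-2 ^ m) (2 ^ m)) fun y hy ↦ ?_
  rw [mem_Icc] at hy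
  rw [hsupp m y (by rw [lt_abs]; omega), norm_zero, zero_pow two_ne_zero]

lemma ind4_mul_eq_zero {K : ℕ → ℤ → ℂ} (hsupp : ∀ m x, (2 ^ m : ℤ) < |x| → K m x = 0)
    (n m : ℕ) (x y : ℤ) (hy : y ∉ Icc (x - 4 * 2 ^ n) (x + 4 * 2 ^ n) ∩ Icc (-2 ^ m) (2 ^ m)) :
    ind4 n (x - y) * K m y = 0 := by
  simp only [mem_inter, mem_Icc, not_and_or, not_le] at hy
  rcases hy with hy | hy
  · rw [ind4, if_neg (by rw [abs_le]; omega), zero_mul]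
  · rw [hsupp m y (by rw [lt_abs]; omega), mul_zero]

lemma norm_conv_ind4_le {K : ℕ → ℤ → ℂ} (hsupp : ∀ m x, (2 ^ m : ℤ) < |x| → K m x = 0)
    (hl2 : ∀ m, (∑' y : ℤ, ‖K m y‖ ^ 2) ≤ 1 / 2 ^ m) (n k : ℕ) (x : ℤ) {c : ℕ}
    (hc : #(Icc (x - 4 * 2 ^ n) (x + 4 * 2 ^ n) ∩ Icc (-2 ^ (n + k)) (2 ^ (n + k))) ≤ c * 2 ^ n) :
    ‖conv (ind4 n) (K (n + k)) x‖ ≤ √c * (√2)⁻¹ ^ k := by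
  have hc' : (#(Icc (x - 4 * 2 ^ n) (x + 4 * 2 ^ n) ∩ Icc (-2 ^ (n + k)) (2 ^ (n + k))) : ℝ)
      ≤ c * 2 ^ n := by exact_mod_cast hc
  calc ‖conv (ind4 n) (K (n + k)) x‖
      ≤ √(#(Icc (x - 4 * 2 ^ n) (x + 4 * 2 ^ n) ∩ Icc (-2 ^ (n + k)) (2 ^ (n + k))) *
          ∑' y, ‖K (n + k) y‖ ^ 2) :=
        norm_conv_le_sqrt_card_mul (norm_ind4_le_one n) (ind4_mul_eq_zero hsupp n (n + k) x)
          (summable_sq_norm_of_support hsupp _)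
    _ ≤ √(c * 2 ^ n * (1 / 2 ^ (n + k))) := by gcongr; exact hl2 _
    _ = √c * (√2)⁻¹ ^ k := by
        rw [show (c : ℝ) * 2 ^ n * (1 / 2 ^ (n + k)) = c / 2 ^ k by rw [pow_add]; field_simp,
          Real.sqrt_div' _ (by positivity), Real.sqrt_pow_eq_pow_sqrt zero_le_two, div_eq_mul_inv,
          inv_pow]

lemma tsum_norm_conv_ind4_le {K : ℕ → ℤ → ℂ} (hsupp : ∀ m x, (2 ^ m : ℤ) < |x| → K m x = 0)
    (hl2 : ∀ m, (∑' y : ℤ, ‖K m y‖ ^ 2) ≤ 1 / 2 ^ m) (n : ℕ) (x : ℤ) :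
    ∑' m : {m : ℕ // n < m}, ‖conv (ind4 n) (K m) x‖ ≤
      √5 * (√2)⁻¹ + 3 * ((√2)⁻¹ ^ 2 * (1 - (√2)⁻¹)⁻¹) := by
  have hr : (√2)⁻¹ < 1 := inv_lt_one_of_one_lt₀ (by rw [Real.lt_sqrt zero_le_one]; norm_num)
  have hgeom : ∑' k : ℕ, (√2)⁻¹ ^ k = (1 - (√2)⁻¹)⁻¹ := tsum_geometric_of_lt_one (by positivity) hr
  have hpow : (0 : ℤ) < 2 ^ n := by positivity
  have hfirst : ‖conv (ind4 n) (K (n + 1)) x‖ ≤ √5 * (√2)⁻¹ := by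
    simpa using norm_conv_ind4_le hsupp hl2 n 1 x (c := 5)
      ((card_Icc_inter_Icc_le_right _ _ _ _).trans
        (by rw [Int.toNat_le, pow_succ]; push_cast; omega))
  have hrest : ∀ k, ‖conv (ind4 n) (K (n + (k + 1))) x‖ ≤ 3 * (√2)⁻¹ ^ (k + 1) := by
    intro k
    have h := norm_conv_ind4_le hsupp hl2 n (k + 1) x (c := 9)
      ((card_Icc_inter_Icc_le_left _ _ _ _).trans (by rw [Int.toNat_le]; push_cast; omega))
    rwa [Nat.cast_ofNat, show (9 : ℝ) = 3 ^ 2 by norm_num, Real.sqrt_sq zero_le_three] at h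
  have hgeom3 : Summable fun k ↦ 3 * (√2)⁻¹ ^ k :=
    (summable_geometric_of_lt_one (by positivity) hr).mul_left 3
  have hsum : Summable fun k ↦ ‖conv (ind4 n) (K (n + (k + 1))) x‖ :=
    .of_nonneg_of_le (fun _ ↦ norm_nonneg _) hrest (hgeom3.comp_injective (add_left_injective 1))
  rw [tsum_subtype_lt_eq (fun m ↦ ‖conv (ind4 n) (K m) x‖), hsum.tsum_eq_zero_add]
  refine add_le_add hfirst ?_
  calc ∑' k, ‖conv (ind4 n) (K (n + (k + 1 + 1))) x‖ ≤ ∑' k : ℕ, 3 * (√2)⁻¹ ^ (k + 1 + 1) :=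
        hsum.comp_injective (add_left_injective 1) |>.tsum_le_tsum (fun k ↦ hrest (k + 1))
          (hgeom3.comp_injective (add_left_injective 2))
    _ = 3 * ((√2)⁻¹ ^ 2 * (1 - (√2)⁻¹)⁻¹) := by
        rw [tsum_congr fun k ↦ (by ring : 3 * (√2)⁻¹ ^ (k + 1 + 1) = 3 * (√2)⁻¹ ^ 2 * (√2)⁻¹ ^ k),
          tsum_mul_left, hgeom, mul_assoc]

lemma sqrt_five_mul_inv_sqrt_two_add_le :
    √5 * (√2)⁻¹ + 3 * ((√2)⁻¹ ^ 2 * (1 - (√2)⁻¹)⁻¹) ≤ √8 / (√2 - 1) := by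
  have hq1 : 1 < √2 := by rw [Real.lt_sqrt zero_le_one]; norm_num
  have hq1' : √2 - 1 ≠ 0 := (sub_pos.2 hq1).ne'
  have h52 : 2 ≤ √5 := by rw [Real.le_sqrt zero_le_two] <;> norm_num
  have hlhs : √5 * (√2)⁻¹ + 3 * ((√2)⁻¹ ^ 2 * (1 - (√2)⁻¹)⁻¹) =
      (√5 * (√2 - 1) + 3) / (√2 * (√2 - 1)) := by
    field_simp
  have hrhs : √8 / (√2 - 1) = 4 / (√2 * (√2 - 1)) := by
    rw [show (8 : ℝ) = 2 ^ 2 * 2 by norm_num, Real.sqrt_mul (by norm_num),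
      Real.sqrt_sq zero_le_two]
    field_simp
    norm_num
  rw [hlhs, hrhs]
  gcongr
  -- `√5 * (√2 - 1) ≤ 1` is `√10 ≤ 1 + √5`, which squares to `2 ≤ √5`
  nlinarith [Real.sq_sqrt zero_le_two, Real.sq_sqrt (show (0 : ℝ) ≤ 5 by norm_num),
    mul_pos (by linarith : (0 : ℝ) < √5) (by linarith : (0 : ℝ) < √2)]

theorem stmt1_general (K : ℕ → ℤ → ℂ)
    (hsupp : ∀ m x, (2 ^ m : ℤ) < |x| → K m x = 0)
    (hl2 : ∀ m, (∑' y : ℤ, ‖K m y‖ ^ 2) ≤ 1 / 2 ^ m)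
    (n : ℕ) (x : ℤ) :
    (∑' m : {m : ℕ // n < m}, ‖conv (ind4 n) (K m) x‖) ≤
        Real.sqrt (8 * 2 ^ n) * ∑' m : {m : ℕ // n < m}, (Real.sqrt (2 ^ (m : ℕ)))⁻¹ ∧
      Real.sqrt (8 * 2 ^ n) * (∑' m : {m : ℕ // n < m}, (Real.sqrt (2 ^ (m : ℕ)))⁻¹) ≤
        Real.sqrt 8 / (Real.sqrt 2 - 1) := by
  have hrhs := sqrt_mul_tsum_inv_sqrt_two_pow (by norm_num : (0 : ℝ) ≤ 8) n
  refine ⟨?_, hrhs.le⟩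
  rw [hrhs]
  exact (tsum_norm_conv_ind4_le hsupp hl2 n x).trans sqrt_five_mul_inv_sqrt_two_add_le

/-- tail estimate for convolutions of blocks of dyadic scales `j = 2^m > s = 2^n`. -/
theorem stmt1 (K : ℕ → ℤ → ℂ)
    (hsupp : ∀ m x, (2 ^ m : ℤ) < |x| → K m x = 0)
    (hl2 : ∀ m, (∑' y : ℤ, ‖K m y‖ ^ 2) ≤ 1 / 2 ^ m)
    (n : ℕ) (x : ℤ) (hx : |x| ≤ (2 * 2 ^ n : ℤ)) :
    (∑' m : {m : ℕ // n < m}, ‖conv (ind4 n) (K m) x‖) ≤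
        Real.sqrt (8 * 2 ^ n) * ∑' m : {m : ℕ // n < m}, (Real.sqrt (2 ^ (m : ℕ)))⁻¹ ∧
      Real.sqrt (8 * 2 ^ n) * (∑' m : {m : ℕ // n < m}, (Real.sqrt (2 ^ (m : ℕ)))⁻¹) ≤
        Real.sqrt 8 / (Real.sqrt 2 - 1) :=
  stmt1_general K hsupp hl2 n x
end

section
/- Let K = ∑_{j dyadic, 𝒥 ≤ j ≤ ℳ} K_j where each K_j : ℤ → ℂ is supported in [-j, j] with ∑_y |K_j(y)|² ≤ 1/j, and suppose the convolution operator f ↦ K * f has ℓ²(ℤ) operator norm at most 1. Then for every dyadic s with 𝒥 ≤ s ≤ ℳ, the partial-sum means satisfy |∑_{j dyadic, 𝒥 ≤ j ≤ s} ∑_y K_j(y)| ≤ C, for a universal constant C independent of s, 𝒥, ℳ. -/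
/-!
Test the ℓ² bound against the indicator `f` of `[-2·2ⁿ, 2·2ⁿ]`. For `|x| ≤ 2ⁿ` the window sees the
whole support of every block `K m` with `m ≤ n`, so `(K * f)(x)` is the partial mean `S` plus the
contributions of the blocks `m > n`. By Cauchy–Schwarz such a block contributes at most
`√(#window · 2⁻ᵐ) ≤ 3 · 2^((n-m)/2)`, and these sum to at most `9`. Hence `‖K * f‖ ≥ ‖S‖ - 9` on
`2·2ⁿ + 1` points, while `‖K * f‖₂² ≤ ‖f‖₂² = 4·2ⁿ + 1`; this forces `‖S‖ ≤ 9 + √2`.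
-/

open Finset Function

section WindowSums

variable {G E : Type*} [AddGroup G]

lemma sum_sub_eq_tsum [AddCommMonoid E] [TopologicalSpace E] {g : G → E} {s : Finset G}
    {x : G} (h : ∀ y ∉ s, g (x - y) = 0) : ∑ y ∈ s, g (x - y) = ∑' z, g z :=
  (tsum_eq_sum h).symm.trans ((Equiv.subLeft x).tsum_eq g)

lemma norm_sum_sub_sq_le [SeminormedAddCommGroup E] {g : G → E}
    (hg : Summable fun z => ‖g z‖ ^ 2) (s : Finset G) (x : G) :
    ‖∑ y ∈ s, g (x - y)‖ ^ 2 ≤ #s * ∑' z, ‖g z‖ ^ 2 := by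
  have hwindow : ∑ y ∈ s, ‖g (x - y)‖ ^ 2 ≤ ∑' z, ‖g z‖ ^ 2 := by
    rw [← (Equiv.subLeft x).tsum_eq]
    exact ((Equiv.subLeft x).summable_iff.mpr hg).sum_le_tsum s fun _ _ => by positivity
  calc ‖∑ y ∈ s, g (x - y)‖ ^ 2 ≤ (∑ y ∈ s, ‖g (x - y)‖) ^ 2 := by
        gcongr; exact norm_sum_le _ _
    _ ≤ #s * ∑ y ∈ s, ‖g (x - y)‖ ^ 2 := sq_sum_le_card_mul_sum_sq
    _ ≤ #s * ∑' z, ‖g z‖ ^ 2 := by gcongr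

end WindowSums

lemma summable_norm_sq_of_finite_support {α E : Type*} [NormedAddCommGroup E] {f : α → E}
    (hf : (support f).Finite) : Summable fun x => ‖f x‖ ^ 2 :=
  summable_of_hasFiniteSupport (hf.subset fun x hx => by simpa using hx)

lemma card_mul_sq_le_tsum {α E : Type*} [SeminormedAddCommGroup E] {h : α → E}
    (hh : Summable fun x => ‖h x‖ ^ 2) {s : Finset α} {a : ℝ} (ha : 0 ≤ a)
    (hs : ∀ x ∈ s, a ≤ ‖h x‖) : #s * a ^ 2 ≤ ∑' x, ‖h x‖ ^ 2 := by
  rw [← nsmul_eq_mul]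
  exact (card_nsmul_le_sum s _ _ fun x hx => pow_le_pow_left₀ ha (hs x hx) 2).trans
    (hh.sum_le_tsum s fun _ _ => by positivity)

lemma tsum_norm_indicator_one_sq {α : Type*} (s : Finset α) :
    ∑' x, ‖(s : Set α).indicator (1 : α → ℂ) x‖ ^ 2 = #s := by
  rw [tsum_eq_sum (s := s) fun x hx => by simp [hx], card_eq_sum_ones, Nat.cast_sum]
  exact sum_congr rfl fun x hx => by simp [hx]

lemma card_Icc_neg_self {r : ℤ} (hr : 0 ≤ r) : (#(Icc (-r) r) : ℤ) = 2 * r + 1 := by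
  rw [Int.card_Icc, Int.toNat_of_nonneg (by omega)]
  ring

lemma sum_Icc_sub_eq_tsum {E : Type*} [AddCommMonoid E] [TopologicalSpace E] {g : ℤ → E}
    {a r x : ℤ} (hg : support g ⊆ Set.Icc (-a) a) (hx : |x| + a ≤ r) :
    ∑ y ∈ Icc (-r) r, g (x - y) = ∑' z, g z := by
  refine sum_sub_eq_tsum fun y hy => notMem_support.mp fun hy' => hy ?_
  have := hg hy'
  simp only [Set.mem_Icc, mem_Icc] at this ⊢
  have := le_abs_self x
  have := neg_abs_le x
  omega

lemma conv_indicator_one (g : ℤ → ℂ) (s : Finset ℤ) (x : ℤ) :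
    conv g ((s : Set ℤ).indicator 1) x = ∑ y ∈ s, g (x - y) := by
  rw [conv, tsum_eq_sum (s := s) fun y hy => by simp [hy]]
  exact sum_congr rfl fun y hy => by simp [hy]

lemma finite_support_conv {f g : ℤ → ℂ} (hf : (support f).Finite) (hg : (support g).Finite) :
    (support (conv f g)).Finite := by
  refine (Set.Finite.add hf hg).subset fun x hx => ?_
  by_contra hnot
  refine hx ((tsum_congr fun y => ?_).trans tsum_zero)
  by_contra hy
  exact hnot ⟨x - y, left_ne_zero_of_mul hy, y, right_ne_zero_of_mul hy, sub_add_cancel x y⟩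

lemma sum_Ico_le_three_mul_of_sq_le {b : ℕ → ℝ} {a : ℝ} (ha : 0 ≤ a) {n M : ℕ}
    (hb : ∀ m ∈ Ico (n + 1) M, b m ^ 2 ≤ a ^ 2 * 2 ^ n / 2 ^ m) :
    ∑ m ∈ Ico (n + 1) M, b m ≤ 3 * a := by
  -- `2^(-k/2) ≤ (3/4)^k` keeps square roots out of the estimate.
  have hterm : ∀ m ∈ Ico (n + 1) M, b m ≤ a * (3 / 4) ^ (m - n) := by
    intro m hm
    obtain ⟨k, rfl⟩ : ∃ k, m = n + k := ⟨m - n, by have := (mem_Ico.mp hm).1; omega⟩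
    have hsq : b (n + k) ^ 2 ≤ (a * (3 / 4) ^ k) ^ 2 := calc
      b (n + k) ^ 2 ≤ a ^ 2 * 2 ^ n / 2 ^ (n + k) := hb _ hm
      _ = a ^ 2 * (1 / 2) ^ k := by rw [pow_add, one_div_pow]; field_simp
      _ ≤ a ^ 2 * (9 / 16) ^ k := by
        gcongr a ^ 2 * ?_
        exact pow_le_pow_left₀ (by norm_num) (by norm_num) k
      _ = (a * (3 / 4) ^ k) ^ 2 := by rw [mul_pow, ← pow_mul, mul_comm k, pow_mul]; norm_num
    simpa using (le_abs_self _).trans (abs_le_of_sq_le_sq hsq (by positivity))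
  calc ∑ m ∈ Ico (n + 1) M, b m ≤ ∑ m ∈ Ico (n + 1) M, a * (3 / 4) ^ (m - n) :=
        sum_le_sum hterm
    _ = a * (3 / 4) * ∑ k ∈ range (M - (n + 1)), (3 / 4 : ℝ) ^ k := by
        rw [sum_Ico_eq_sum_range, mul_sum]
        exact sum_congr rfl fun k _ => by rw [show n + 1 + k - n = k + 1 by omega, pow_succ]; ring
    _ ≤ a * (3 / 4) * 4 := by
        gcongr
        rw [range_eq_Ico]
        exact (geom_sum_Ico_le_of_lt_one (by norm_num) (by norm_num)).trans (by norm_num)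
    _ = 3 * a := by ring

lemma norm_mean_sub_le_norm_conv_indicator {J M n : ℕ} {K : ℕ → ℤ → ℂ}
    (hsupp : ∀ m, support (K m) ⊆ Set.Icc (-2 ^ m) (2 ^ m))
    (hl2 : ∀ m, ∑' y, ‖K m y‖ ^ 2 ≤ 1 / 2 ^ m) (hJn : J ≤ n) (hnM : n ≤ M) {x : ℤ}
    (hx : |x| ≤ 2 ^ n) :
    ‖∑ m ∈ Icc J n, ∑' y, K m y‖ - 9 ≤
      ‖conv (fun y => ∑ m ∈ Icc J M, K m y)
        ((Icc (-(2 * 2 ^ n)) (2 * 2 ^ n) : Set ℤ).indicator 1) x‖ := by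
  set I : Finset ℤ := Icc (-(2 * 2 ^ n)) (2 * 2 ^ n)
  set T : ℕ → ℂ := fun m => ∑ y ∈ I, K m (x - y)
  have hsplit : conv (fun y => ∑ m ∈ Icc J M, K m y) ((I : Set ℤ).indicator 1) x =
      ∑ m ∈ Icc J n, T m + ∑ m ∈ Ico (n + 1) (M + 1), T m := by
    rw [conv_indicator_one, sum_comm, ← Ico_add_one_right_eq_Icc, ← Ico_add_one_right_eq_Icc,
      sum_Ico_consecutive _ (by omega) (by omega)]
  have hhead : ∑ m ∈ Icc J n, T m = ∑ m ∈ Icc J n, ∑' y, K m y := by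
    refine sum_congr rfl fun m hm => sum_Icc_sub_eq_tsum (hsupp m) ?_
    have : (2 : ℤ) ^ m ≤ 2 ^ n := pow_le_pow_right₀ (by norm_num) (mem_Icc.mp hm).2
    omega
  have hI : (#I : ℝ) = 4 * 2 ^ n + 1 := by
    have := card_Icc_neg_self (r := 2 * 2 ^ n) (by positivity)
    exact_mod_cast (by linear_combination this : (#I : ℤ) = 4 * 2 ^ n + 1)
  have hblock : ∀ m, ‖T m‖ ^ 2 ≤ 3 ^ 2 * 2 ^ n / 2 ^ m := fun m => calc
    ‖T m‖ ^ 2 ≤ #I * ∑' z, ‖K m z‖ ^ 2 :=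
      norm_sum_sub_sq_le (g := K m) (summable_norm_sq_of_finite_support
        ((Set.finite_Icc (-2 ^ m : ℤ) (2 ^ m)).subset (hsupp m))) I x
    _ ≤ (4 * 2 ^ n + 1) * (1 / 2 ^ m) := by rw [hI]; gcongr; exact hl2 m
    _ ≤ 3 ^ 2 * 2 ^ n / 2 ^ m := by
      have : (1 : ℝ) ≤ 2 ^ n := one_le_pow₀ (by norm_num)
      rw [mul_one_div]; gcongr; linarith
  have htail : ‖∑ m ∈ Ico (n + 1) (M + 1), T m‖ ≤ 9 := calc
    _ ≤ ∑ m ∈ Ico (n + 1) (M + 1), ‖T m‖ := norm_sum_le _ _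
    _ ≤ 3 * 3 := sum_Ico_le_three_mul_of_sq_le (by norm_num) fun m _ => hblock m
    _ = 9 := by norm_num
  rw [hsplit, hhead]
  have := norm_le_insert' (∑ m ∈ Icc J n, ∑' y, K m y) (-∑ m ∈ Ico (n + 1) (M + 1), T m)
  rw [sub_neg_eq_add, norm_neg] at this
  linarith

/-- uniform bound on cumulative means of the building blocks of an
ℓ²-bounded kernel `K = ∑_{J ≤ m ≤ Mx} K_{2^m}`. -/
theorem stmt2 : ∃ C : ℝ, 0 < C ∧ ∀ (J Mx : ℕ) (K : ℕ → ℤ → ℂ),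
    (∀ m, m < J ∨ Mx < m → K m = 0) →
    (∀ m x, (2 ^ m : ℤ) < |x| → K m x = 0) →
    (∀ m, (∑' y : ℤ, ‖K m y‖ ^ 2) ≤ 1 / 2 ^ m) →
    (∀ f : ℤ → ℂ, (Function.support f).Finite →
      (∑' x : ℤ, ‖conv (fun y => ∑ m ∈ Finset.Icc J Mx, K m y) f x‖ ^ 2) ≤
        ∑' x : ℤ, ‖f x‖ ^ 2) →
    ∀ n, J ≤ n → n ≤ Mx →
      ‖∑ m ∈ Finset.Icc J n, ∑' y : ℤ, K m y‖ ≤ C := by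
  refine ⟨11, by norm_num, fun J Mx K _ hKsupp hl2 hbounded n hJn hnM => ?_⟩
  have hsupp : ∀ m, support (K m) ⊆ Set.Icc (-2 ^ m) (2 ^ m) := fun m x hx =>
    abs_le.mp (not_lt.mp fun h => hx (hKsupp m x h))
  set S := ∑ m ∈ Icc J n, ∑' y, K m y
  set I : Finset ℤ := Icc (-(2 * 2 ^ n)) (2 * 2 ^ n)
  set W : Finset ℤ := Icc (-2 ^ n) (2 ^ n)
  set f : ℤ → ℂ := (I : Set ℤ).indicator 1
  have hf : (support f).Finite := I.finite_toSet.subset Set.support_indicator_subset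
  have hKf : (support (conv (fun y => ∑ m ∈ Icc J Mx, K m y) f)).Finite :=
    finite_support_conv (HasFiniteSupport.sum
      (fun m => (Set.finite_Icc (-2 ^ m : ℤ) (2 ^ m)).subset (hsupp m)) _) hf
  have hsum := summable_norm_sq_of_finite_support hKf
  by_contra! hS
  have henergy : (#W : ℝ) * (‖S‖ - 9) ^ 2 ≤ #I := calc
    _ ≤ ∑' x, ‖conv (fun y => ∑ m ∈ Icc J Mx, K m y) f x‖ ^ 2 :=
      card_mul_sq_le_tsum hsum (by linarith) fun x hx =>
        norm_mean_sub_le_norm_conv_indicator hsupp hl2 hJn hnM (abs_le.mpr (mem_Icc.mp hx))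
    _ ≤ ∑' x, ‖f x‖ ^ 2 := hbounded f hf
    _ = #I := tsum_norm_indicator_one_sq I
  have hW : (#W : ℤ) = 2 * 2 ^ n + 1 := card_Icc_neg_self (by positivity)
  have hI : (#I : ℤ) = 4 * 2 ^ n + 1 := by
    rw [card_Icc_neg_self (by positivity)]; ring
  have hpow : (1 : ℝ) ≤ 2 ^ n := one_le_pow₀ (by norm_num)
  rw [show (#W : ℝ) = 2 * 2 ^ n + 1 by exact_mod_cast hW,
    show (#I : ℝ) = 4 * 2 ^ n + 1 by exact_mod_cast hI] at henergy
  have hgap : 4 < (‖S‖ - 9) ^ 2 := by nlinarith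
  nlinarith [mul_lt_mul_of_pos_left hgap (by positivity : (0 : ℝ) < 2 * 2 ^ n + 1)]
end

section
/- Let ρ : ℤ → ℂ satisfy |ρ(x+h) − ρ(x)| ≤ (C/s)(|h|/s)^γ for some γ > 0, and let B = ∑_j B_j where the B_j are supported on disjoint dyadic intervals Q_j of common length 2^k ≤ s, each with ∑_{y∈Q_j} B_j(y) = 0 and ‖B_j‖_{ℓ¹} ≤ λ·2^k. Assume ρ is supported in [−Cs, Cs]. Then for every x, |(ρ * B)(x)| ≤ C'·λ·(2^k/s)^γ, where C' depends only on C and γ. -/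
/-!
Split ℤ into the blocks `[q m, (q + 1) m)`, `m = 2 ^ k`. Since `B` has mean zero on each block,
`ρ(x - q m)` may be subtracted from `ρ(x - y)` there, and the Hölder bound with `|y - q m| < m`
bounds the block's contribution by `(C / s) (m / s) ^ γ ‖B‖_{ℓ¹(block)} ≤ (C / s) (m / s) ^ γ λ m`.
As `ρ` lives in `[-C s, C s]`, only about `2 (C s + m) / m` blocks contribute, and
`2 (C s + m) / m · (C / s) (m / s) ^ γ λ m ≤ 2 C (C + 1) λ (m / s) ^ γ` since `m ≤ s`.
-/

open Finset

theorem Int.sum_Ico_mul_eq_sum_blocks {M : Type*} [AddCommMonoid M] (f : ℤ → M) {m : ℤ}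
    (hm : 0 ≤ m) {a b : ℤ} (hab : a ≤ b) :
    ∑ y ∈ Ico (a * m) (b * m), f y = ∑ q ∈ Ico a b, ∑ y ∈ Ico (q * m) ((q + 1) * m), f y := by
  induction b, hab using Int.leInduction with
  | base => simp
  | succ b hab ih =>
    have hab' : a * m ≤ b * m := mul_le_mul_of_nonneg_right hab hm
    have hb : b * m ≤ (b + 1) * m := mul_le_mul_of_nonneg_right (by omega) hm
    rw [← Ico_union_Ico_eq_Ico hab' hb, sum_union (Ico_disjoint_Ico_consecutive _ _ _), ih,
      ← insert_Ico_right_eq_Ico_add_one hab, sum_insert (by simp), add_comm]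

theorem Int.ediv_sub_ediv_mul_lt (a b : ℤ) {m : ℤ} (hm : 0 < m) :
    (b / m - a / m) * m < b - a + m := by
  have := Int.ediv_mul_le b hm.ne'
  have := Int.lt_ediv_add_one_mul_self a hm
  linarith

theorem norm_sum_mul_le_of_sum_eq_zero {R ι : Type*} [NormedRing R] (s : Finset ι) {g b : ι → R}
    (c : R) {K : ℝ} (hb : ∑ i ∈ s, b i = 0) (hg : ∀ i ∈ s, ‖g i - c‖ ≤ K) :
    ‖∑ i ∈ s, g i * b i‖ ≤ K * ∑ i ∈ s, ‖b i‖ := by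
  have hsub : ∑ i ∈ s, g i * b i = ∑ i ∈ s, (g i - c) * b i := by
    simp only [sub_mul, sum_sub_distrib, ← mul_sum, hb, mul_zero, sub_zero]
  rw [hsub, mul_sum]
  refine (norm_sum_le _ _).trans (sum_le_sum fun i hi => ?_)
  exact (norm_mul_le _ _).trans (mul_le_mul_of_nonneg_right (hg i hi) (norm_nonneg _))

section Blocks

variable {ρ B : ℤ → ℂ} {m N : ℤ}

theorem conv_eq_sum_blocks (hm : 0 < m) (hN : 0 ≤ N) (hsupp : ∀ z, N < |z| → ρ z = 0) (x : ℤ) :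
    conv ρ B x = ∑ q ∈ Ico ((x - N) / m) ((x + N) / m + 1),
      ∑ y ∈ Ico (q * m) ((q + 1) * m), ρ (x - y) * B y := by
  have hhi := Int.lt_ediv_add_one_mul_self (x + N) hm
  have hle : (x - N) / m ≤ (x + N) / m + 1 := by
    have := Int.ediv_le_ediv hm (show x - N ≤ x + N by omega)
    omega
  rw [← Int.sum_Ico_mul_eq_sum_blocks _ hm.le hle, conv]
  refine tsum_eq_sum fun y hy => ?_
  rw [hsupp (x - y) ?_, zero_mul]
  rw [mem_Ico, not_and_or, not_le, not_lt] at hy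
  rcases hy with hy | hy
  · have := Int.ediv_mul_le (x - N) hm.ne'
    exact lt_abs.2 (Or.inl (by linarith))
  · exact lt_abs.2 (Or.inr (by linarith))

theorem norm_conv_mul_le (hm : 0 < m) (hN : 0 ≤ N) (hsupp : ∀ z, N < |z| → ρ z = 0) {K L : ℝ}
    (hρ : ∀ z h, |h| < m → ‖ρ (z + h) - ρ z‖ ≤ K)
    (hmean : ∀ q, ∑ y ∈ Ico (q * m) ((q + 1) * m), B y = 0)
    (hl1 : ∀ q, ∑ y ∈ Ico (q * m) ((q + 1) * m), ‖B y‖ ≤ L) (x : ℤ) :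
    ‖conv ρ B x‖ * m ≤ 2 * (N + m) * (K * L) := by
  have hK : 0 ≤ K := by simpa using hρ 0 0 (by simpa using hm)
  have hL : 0 ≤ L := (sum_nonneg fun _ _ => norm_nonneg _).trans (hl1 0)
  have hblock : ∀ q, ‖∑ y ∈ Ico (q * m) ((q + 1) * m), ρ (x - y) * B y‖ ≤ K * L := by
    intro q
    refine (norm_sum_mul_le_of_sum_eq_zero _ (ρ (x - q * m)) (hmean q) fun y hy => ?_).trans
      (mul_le_mul_of_nonneg_left (hl1 q) hK)
    rw [mem_Ico] at hy
    simpa using hρ (x - q * m) (q * m - y) (abs_lt.2 ⟨by linarith, by linarith⟩)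
  have hcount : ((Ico ((x - N) / m) ((x + N) / m + 1)).card : ℝ) * m ≤ 2 * (N + m) := by
    have := Int.ediv_sub_ediv_mul_lt (x - N) (x + N) hm
    have hmono := Int.ediv_le_ediv hm (show x - N ≤ x + N by omega)
    rw [Int.card_Ico, ← Int.cast_natCast, Int.toNat_of_nonneg (by omega)]
    exact_mod_cast (by linarith : ((x + N) / m + 1 - (x - N) / m) * m ≤ 2 * (N + m))
  calc ‖conv ρ B x‖ * m
      ≤ ((Ico ((x - N) / m) ((x + N) / m + 1)).card * (K * L)) * m := by
        rw [conv_eq_sum_blocks hm hN hsupp]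
        gcongr
        rw [← nsmul_eq_mul]
        exact (norm_sum_le _ _).trans (sum_le_card_nsmul _ _ _ fun q _ => hblock q)
    _ ≤ 2 * (N + m) * (K * L) := by
        rw [mul_right_comm]
        exact mul_le_mul_of_nonneg_right hcount (mul_nonneg hK hL)

end Blocks

/-- smoothing estimate. If `ρ` is Hölder at scale `s` and supported in
`[-Cs, Cs]`, and `B` is a sum of mean-zero pieces on disjoint dyadic intervals of
length `2^k ≤ s` with ℓ¹ norms ≤ `λ·2^k`, then `|(ρ * B)(x)| ≤ C'·λ·(2^k/s)^γ`. -/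
theorem stmt15 (C γ : ℝ) (hC : 0 < C) (hγ : 0 < γ) : ∃ C' : ℝ, 0 < C' ∧
    ∀ (s lam : ℝ) (k : ℕ) (ρ B : ℤ → ℂ),
    1 ≤ s → 0 < lam → (2 : ℝ) ^ k ≤ s →
    (∀ x h : ℤ, ‖ρ (x + h) - ρ x‖ ≤ C / s * (((|h| : ℤ) : ℝ) / s) ^ γ) →
    (∀ x : ℤ, C * s < ((|x| : ℤ) : ℝ) → ρ x = 0) →
    (∀ q : ℤ, (∑ y ∈ Finset.Ico (q * 2 ^ k) ((q + 1) * 2 ^ k), B y) = 0) →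
    (∀ q : ℤ, (∑ y ∈ Finset.Ico (q * 2 ^ k) ((q + 1) * 2 ^ k), ‖B y‖) ≤ lam * 2 ^ k) →
    ∀ x : ℤ, ‖conv ρ B x‖ ≤ C' * lam * ((2 : ℝ) ^ k / s) ^ γ := by
  refine ⟨2 * C * (C + 1), by positivity, fun s lam k ρ B hs hlam hks hρ hsupp hmean hl1 x => ?_⟩
  have hs0 : 0 < s := one_pos.trans_le hs
  have hHolder : ∀ z h : ℤ, |h| < 2 ^ k → ‖ρ (z + h) - ρ z‖ ≤ C / s * ((2 : ℝ) ^ k / s) ^ γ := by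
    intro z h hh
    refine (hρ z h).trans ?_
    have : ((|h| : ℤ) : ℝ) ≤ 2 ^ k := by exact_mod_cast hh.le
    gcongr
  have hsupp' : ∀ z, ⌊C * s⌋ < |z| → ρ z = 0 := fun z hz => hsupp z (Int.floor_lt.1 hz)
  have key := norm_conv_mul_le (by positivity) (Int.floor_nonneg.2 (by positivity)) hsupp'
    hHolder hmean (by exact_mod_cast hl1) x
  push_cast at key
  refine le_of_mul_le_mul_right (key.trans ?_) (by positivity : (0 : ℝ) < 2 ^ k)
  have hN : (⌊C * s⌋ : ℝ) + 2 ^ k ≤ (C + 1) * s := by linarith [Int.floor_le (C * s)]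
  calc 2 * ((⌊C * s⌋ : ℝ) + 2 ^ k) * (C / s * ((2 : ℝ) ^ k / s) ^ γ * (lam * 2 ^ k))
      ≤ 2 * ((C + 1) * s) * (C / s * ((2 : ℝ) ^ k / s) ^ γ * (lam * 2 ^ k)) := by gcongr
    _ = 2 * C * (C + 1) * lam * ((2 : ℝ) ^ k / s) ^ γ * 2 ^ k := by field_simp
end
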